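/- Let v : 2^M → ℝ be a pair-demand valuation on four items M = {a,b,c,d} with item weights w_a ≤ w_b ≤ w_c ≤ w_d. Then μ(M) = min(v({a,d}), v({b,c})), where μ(M) = max over 2-partitions (A,B) of M of min(v(A), v(B)). -/
import Mathlib


open Finset

/-- Pair-demand valuation: the best sum of at most two item weights in the bundle. -/
noncomputable def pd {α : Type*} [DecidableEq α] (w : α → ℝ) (S : Finset α) : ℝ :=
  (S.powerset.filter fun T => T.card ≤ 2).sup' ⟨∅, by simp⟩ fun T => ∑ j ∈ T, w j

/-- Two-part maximin share: max over partitions (A, S \ A) of S of the min value. -/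
noncomputable def mu {α : Type*} [DecidableEq α] (v : Finset α → ℝ) (S : Finset α) : ℝ :=
  S.powerset.sup' ⟨∅, Finset.empty_mem_powerset S⟩ fun A => min (v A) (v (S \ A))

section Aux
variable {α : Type*} [DecidableEq α] (w : α → ℝ)

lemma sum_le_pair (hw : ∀ g, 0 ≤ w g) {x y : α} {T : Finset α} (hT : T ⊆ {x, y}) :
    ∑ j ∈ T, w j ≤ w x + w y := by
  calc ∑ j ∈ T, w j ≤ ∑ j ∈ ({x, y} : Finset α), w j :=
        Finset.sum_le_sum_of_subset_of_nonneg hT (fun i _ _ => hw i)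
    _ ≤ w x + w y := by
        by_cases h : x = y
        · subst h
          have hxx : ({x, x} : Finset α) = {x} :=
            Finset.insert_eq_self.mpr (Finset.mem_singleton_self x)
          rw [hxx, Finset.sum_singleton]
          linarith [hw x]
        · rw [Finset.sum_pair h]

lemma pd_le_pair (hw : ∀ g, 0 ≤ w g) {x y : α} {S : Finset α} (hS : S ⊆ {x, y}) :
    pd w S ≤ w x + w y := by
  apply Finset.sup'_le
  intro T hT
  simp only [Finset.mem_filter, Finset.mem_powerset] at hT
  exact sum_le_pair w hw (hT.1.trans hS)

lemma pd_le_three (hw : ∀ g, 0 ≤ w g) {x y z : α} {S : Finset α}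
    (hxy : w x ≤ w y) (hyz : w y ≤ w z) (hS : S ⊆ {x, y, z}) :
    pd w S ≤ w y + w z := by
  apply Finset.sup'_le
  intro T hT
  simp only [Finset.mem_filter, Finset.mem_powerset] at hT
  obtain ⟨hTS, hcard⟩ := hT
  have hTS' : T ⊆ {x, y, z} := hTS.trans hS
  by_cases hx : x ∈ T
  · have herase : T.erase x ⊆ {y, z} := by
      intro u hu
      have hu' := hTS' (Finset.mem_of_mem_erase hu)
      have hne := Finset.ne_of_mem_erase hu
      simp only [Finset.mem_insert, Finset.mem_singleton] at hu' ⊢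
      rcases hu' with h | h | h
      · exact absurd h hne
      · exact Or.inl h
      · exact Or.inr h
    have hcard' : (T.erase x).card ≤ 1 := by
      have := Finset.card_erase_of_mem hx
      omega
    have hsum : ∑ j ∈ T.erase x, w j ≤ w z := by
      rcases Finset.eq_empty_or_nonempty (T.erase x) with h | h
      · rw [h, Finset.sum_empty]; exact hw z
      · obtain ⟨u, hu⟩ := Finset.card_eq_one.mp
          (le_antisymm hcard' (Finset.card_pos.mpr h))
        rw [hu, Finset.sum_singleton]
        have hum : u ∈ ({y, z} : Finset α) := herase (hu ▸ Finset.mem_singleton_self u)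
        simp only [Finset.mem_insert, Finset.mem_singleton] at hum
        rcases hum with h' | h'
        · subst h'; exact hyz
        · subst h'; exact le_rfl
    calc ∑ j ∈ T, w j = w x + ∑ j ∈ T.erase x, w j := (Finset.add_sum_erase T w hx).symm
      _ ≤ w y + w z := add_le_add hxy hsum
  · have hsub : T ⊆ {y, z} := by
      intro u hu
      have hu' := hTS' hu
      simp only [Finset.mem_insert, Finset.mem_singleton] at hu' ⊢
      rcases hu' with h | h | h
      · exact absurd h (by rintro rfl; exact hx hu)
      · exact Or.inl h
      · exact Or.inr h
    exact sum_le_pair w hw hsub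

lemma pair_le_pd {x y : α} {S : Finset α} (hxy : x ≠ y) (hx : x ∈ S) (hy : y ∈ S) :
    w x + w y ≤ pd w S := by
  have hmem : ({x, y} : Finset α) ∈ S.powerset.filter fun T => T.card ≤ 2 := by
    simp only [Finset.mem_filter, Finset.mem_powerset]
    refine ⟨?_, ?_⟩
    · intro u hu
      simp only [Finset.mem_insert, Finset.mem_singleton] at hu
      rcases hu with h | h <;> subst h <;> assumption
    · rw [Finset.card_pair hxy]
  rw [← Finset.sum_pair hxy]
  exact Finset.le_sup' (fun T => ∑ j ∈ T, w j) hmem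

end Aux

theorem stmt4 {α : Type*} [DecidableEq α] (a b c d : α)
    (hab : a ≠ b) (hac : a ≠ c) (had : a ≠ d) (hbc : b ≠ c) (hbd : b ≠ d) (hcd : c ≠ d)
    (w : α → ℝ) (hw : ∀ g, 0 ≤ w g)
    (h1 : w a ≤ w b) (h2 : w b ≤ w c) (h3 : w c ≤ w d) :
    mu (pd w) ({a, b, c, d} : Finset α) =
      min (pd w ({a, d} : Finset α)) (pd w ({b, c} : Finset α)) := by
  set M : Finset α := {a, b, c, d} with hM
  have haM : a ∈ M := by simp [hM]
  have hbM : b ∈ M := by simp [hM]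
  have hcM : c ∈ M := by simp [hM]
  have hdM : d ∈ M := by simp [hM]
  have hpd_ad : w a + w d ≤ pd w ({a, d} : Finset α) :=
    pair_le_pd w had (by simp) (by simp)
  have hpd_bc : w b + w c ≤ pd w ({b, c} : Finset α) :=
    pair_le_pd w hbc (by simp) (by simp)
  -- key lemma: for any A ⊆ M with d ∉ A,
  have key : ∀ A : Finset α, A ⊆ M → d ∉ A →
      min (pd w A) (pd w (M \ A)) ≤
        min (pd w ({a, d} : Finset α)) (pd w ({b, c} : Finset α)) := by
    intro A hAM hdA
    have hAabc : A ⊆ {a, b, c} := by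
      intro x hx
      have hxM := hAM hx
      simp only [hM, Finset.mem_insert, Finset.mem_singleton] at hxM ⊢
      rcases hxM with h | h | h | h
      · exact Or.inl h
      · exact Or.inr (Or.inl h)
      · exact Or.inr (Or.inr h)
      · exact absurd h (by rintro rfl; exact hdA hx)
    have hbc_bound : pd w A ≤ pd w ({b, c} : Finset α) :=
      le_trans (pd_le_three w hw h1 h2 hAabc) hpd_bc
    apply le_min
    swap
    · exact le_trans (min_le_left _ _) hbc_bound
    -- now show min ≤ pd {a, d}
    by_cases hb : b ∈ A
    · by_cases hc : c ∈ A
      · -- M \ A ⊆ {a, d}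
        have hsub : M \ A ⊆ {a, d} := by
          intro x hx
          rw [Finset.mem_sdiff] at hx
          obtain ⟨hxM, hxA⟩ := hx
          simp only [hM, Finset.mem_insert, Finset.mem_singleton] at hxM ⊢
          rcases hxM with h | h | h | h
          · exact Or.inl h
          · exact absurd h (by rintro rfl; exact hxA hb)
          · exact absurd h (by rintro rfl; exact hxA hc)
          · exact Or.inr h
        have : pd w (M \ A) ≤ pd w ({a, d} : Finset α) :=
          le_trans (pd_le_pair w hw hsub) hpd_ad
        exact le_trans (min_le_right _ _) this
      · -- A ⊆ {a, b}
        have hsub : A ⊆ {a, b} := by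
          intro x hx
          have := hAabc hx
          simp only [Finset.mem_insert, Finset.mem_singleton] at this ⊢
          rcases this with h | h | h
          · exact Or.inl h
          · exact Or.inr h
          · exact absurd h (by rintro rfl; exact hc hx)
        have : pd w A ≤ pd w ({a, d} : Finset α) := by
          refine le_trans (pd_le_pair w hw hsub) (le_trans ?_ hpd_ad)
          linarith
        exact le_trans (min_le_left _ _) this
    · -- A ⊆ {a, c}
      have hsub : A ⊆ {a, c} := by
        intro x hx
        have := hAabc hx
        simp only [Finset.mem_insert, Finset.mem_singleton] at this ⊢
        rcases this with h | h | h
        · exact Or.inl h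
        · exact absurd h (by rintro rfl; exact hb hx)
        · exact Or.inr h
      have : pd w A ≤ pd w ({a, d} : Finset α) := by
        refine le_trans (pd_le_pair w hw hsub) (le_trans ?_ hpd_ad)
        linarith
      exact le_trans (min_le_left _ _) this
  apply le_antisymm
  · apply Finset.sup'_le
    intro A hA
    rw [Finset.mem_powerset] at hA
    by_cases hdA : d ∈ A
    · have hA' : M \ A ⊆ M := Finset.sdiff_subset
      have hdA' : d ∉ M \ A := by simp [hdA]
      have := key (M \ A) hA' hdA'
      rwa [Finset.sdiff_sdiff_eq_self hA, min_comm (pd w (M \ A))] at this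
    · exact key A hA hdA
  · have hmem : ({a, d} : Finset α) ∈ M.powerset := by
      rw [Finset.mem_powerset]
      intro x hx
      simp only [Finset.mem_insert, Finset.mem_singleton] at hx
      rcases hx with h | h <;> subst h <;> assumption
    have hsd : M \ ({a, d} : Finset α) = {b, c} := by
      ext x
      simp only [hM, Finset.mem_sdiff, Finset.mem_insert, Finset.mem_singleton]
      constructor
      · rintro ⟨h1', h2'⟩
        push_neg at h2'
        rcases h1' with h | h | h | h
        · exact absurd h h2'.1
        · exact Or.inl h
        · exact Or.inr h
        · exact absurd h h2'.2
      · rintro (rfl | rfl)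
        · exact ⟨Or.inr (Or.inl rfl), by push_neg; exact ⟨Ne.symm hab, hbd⟩⟩
        · exact ⟨Or.inr (Or.inr (Or.inl rfl)), by push_neg; exact ⟨Ne.symm hac, hcd⟩⟩
    have hle : min (pd w ({a, d} : Finset α)) (pd w (M \ ({a, d} : Finset α))) ≤
        mu (pd w) M :=
      Finset.le_sup' (fun A => min (pd w A) (pd w (M \ A))) hmem
    rw [hsd] at hle
    exact hle
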